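/- If H ⊑ G (H is strongly embedded in G), then H ⊑* G. -/

import Mathlib

open scoped Classical

/-- A combinatorial pregeometry (matroid) on the ground type `α`, given by a
dimension (rank) function on finite subsets. -/
structure Pregeometry (α : Type*) [DecidableEq α] where
  dim : Finset α → ℕ
  dim_empty : dim ∅ = 0
  dim_le_insert : ∀ (A : Finset α) (x : α), dim A ≤ dim (insert x A)
  insert_le_dim : ∀ (A : Finset α) (x : α), dim (insert x A) ≤ dim A + 1
  submodular : ∀ A B : Finset α, dim (A ∪ B) + dim (A ∩ B) ≤ dim A + dim B

namespace Pregeometry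

variable {α : Type*} [DecidableEq α] (G : Pregeometry α)

/-- Closure of an arbitrary subset. -/
def cl (Y : Set α) : Set α :=
  {x | ∃ A : Finset α, ↑A ⊆ Y ∧ G.dim (insert x A) = G.dim A}

/-- `Y` is closed (in the ambient pregeometry `G`). -/
def IsClosed (Y : Set α) : Prop := G.cl Y = Y

/-- `X` is a closed set of the subpregeometry of `G` induced on `P`
(whose closure operator is `Y ↦ cl Y ∩ P`). -/
def IsClosedIn (P X : Set α) : Prop := X ⊆ P ∧ G.cl X ∩ P = X

/-- Dimension of an arbitrary subset, with value `⊤` when infinite-dimensional. -/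
noncomputable def edim (Y : Set α) : ℕ∞ :=
  ⨆ (A : Finset α) (_ : ↑A ⊆ Y), (G.dim A : ℕ∞)

/-- The (natural number) dimension of a finite-dimensional subset. -/
noncomputable def sdim (Y : Set α) : ℕ := (G.edim Y).toNat

/-- The alternating inclusion–exclusion sum
`Δ_G(Σ) = Σ_{∅ ≠ S ⊆ Σ} (-1)^{|S|+1} d(⋂ S)` of a finite collection of sets. -/
noncomputable def flatSum (Sig : Finset (Set α)) : ℤ :=
  ∑ S ∈ Sig.powerset.filter (· ≠ ∅),
    (-1) ^ (S.card + 1) * (G.sdim (⋂₀ ↑S) : ℤ)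

/-- `P ⊑* Q`: for the subpregeometries induced on `P ⊆ Q`, the dimension of the
intersection of two closed sets of `P` equals the dimension of the intersection
of their closures in `Q` (the closure of `X` in `Q` being `cl X ∩ Q`). -/
def SqStar (P Q : Set α) : Prop := P ⊆ Q ∧
  ∀ X₁ X₂ : Set α, G.IsClosedIn P X₁ → G.IsClosedIn P X₂ →
    G.edim (X₁ ∩ X₂) = G.edim (G.cl X₁ ∩ G.cl X₂ ∩ Q)

/-- `P ⊑ Q`: `P` is strongly embedded in `Q`: for every finite collection `Σ` of
finite-dimensional closed sets of `Q`, `Δ_P(Σ_P) ≤ Δ_Q(Σ)` where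
`Σ_P = {E ∩ P : E ∈ Σ}`. -/
def Sq (P Q : Set α) : Prop := P ⊆ Q ∧
  ∀ Sig : Finset (Set α), (∀ E ∈ Sig, G.IsClosedIn Q E) →
    (∀ E ∈ Sig, G.edim E ≠ ⊤) →
    G.flatSum (Sig.image (· ∩ P)) ≤ G.flatSum Sig

/-- The subpregeometry induced on `P` is flat: every finite collection of
finite-dimensional closed sets satisfies `d(⋃ Σ) ≤ Δ(Σ)`. -/
def FlatIn (P : Set α) : Prop :=
  ∀ Sig : Finset (Set α), (∀ E ∈ Sig, G.IsClosedIn P E) →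
    (∀ E ∈ Sig, G.edim E ≠ ⊤) →
    (G.sdim (⋃₀ ↑Sig) : ℤ) ≤ G.flatSum Sig

/-- The α-function of the subpregeometry of `G` induced on `P`:
`α(X) = |X| − d(X) − Σ_{Y ⊊ X closed} α(Y)`. -/
noncomputable def alphaIn (P : Set α) (X : Finset α) : ℤ :=
  (X.card : ℤ) - (G.dim X : ℤ) -
    ∑ Y ∈ (X.powerset.filter fun Y => Y ≠ X ∧ G.IsClosedIn P ↑Y).attach,
      alphaIn P Y.1
termination_by X.card
decreasing_by
  have h := Y.2
  simp only [Finset.mem_filter, Finset.mem_powerset] at h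
  exact Finset.card_lt_card (lt_of_le_of_ne h.1 h.2.1)

end Pregeometry

/-- A hypergraph on the vertex type `α`: a set of nonempty finite edges. -/
structure Hypergraph' (α : Type*) where
  edges : Set (Finset α)
  nonempty_edges : ∀ e ∈ edges, e ≠ ∅

namespace Hypergraph'

variable {α : Type*} [DecidableEq α] (A : Hypergraph' α)

/-- The set of edges contained in a set of vertices. -/
def edgesIn (P : Set α) : Set (Finset α) := {e | e ∈ A.edges ∧ ↑e ⊆ P}

/-- The predimension `δ(P) = |P| − |R[P]|` of a finite set of vertices. -/
noncomputable def delta (P : Finset α) : ℤ :=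
  (P.card : ℤ) - (A.edgesIn ↑P).ncard

/-- The relative predimension `δ(L/P) = |L∖P| − |R[L∪P]∖R[P]|`. -/
noncomputable def deltaRel (L : Finset α) (P : Set α) : ℤ :=
  ((↑L \ P : Set α).ncard : ℤ) -
    ({e | e ∈ A.edges ∧ ↑e ⊆ ↑L ∪ P ∧ ¬ ↑e ⊆ P} : Set (Finset α)).ncard

/-- `P` is self-sufficient in `A`: `δ(X/P) ≥ 0` for every finite `X`, stated so
as to be meaningful even when infinitely many edges are involved. -/
def SelfSuff (P : Set α) : Prop :=
  ∀ X : Finset α, ∀ Es : Finset (Finset α),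
    (∀ e ∈ Es, e ∈ A.edges ∧ ↑e ⊆ ↑X ∪ P ∧ ¬ ↑e ⊆ P) →
    (Es.card : ℤ) ≤ ((↑X \ P : Set α).ncard : ℤ)

/-- The dimension function associated to a hypergraph:
`d(X) = inf {δ(B) : X ⊆ B finite}`. -/
noncomputable def hdim (X : Finset α) : ℤ :=
  sInf {d : ℤ | ∃ B : Finset α, X ⊆ B ∧ d = A.delta B}

/-- The induced subhypergraph on a set `P` of vertices (keeping `α` as the
ambient vertex type). -/
def restrict (P : Set α) : Hypergraph' α :=
  ⟨{e | e ∈ A.edges ∧ ↑e ⊆ P}, fun e he => A.nonempty_edges e he.1⟩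

/-- A pregeometry `G` is represented by the hypergraph `A` if the associated
dimension function of `A` is the dimension function of `G`. -/
def Represents (G : Pregeometry α) : Prop :=
  ∀ X : Finset α, (G.dim X : ℤ) = A.hdim X

end Hypergraph'

/-! Let `X₁, X₂` be closed in `P`. A finite `A ⊆ cl X₁ ∩ cl X₂ ∩ Q` lies in `E₁ ∩ E₂`, where
`Eᵢ = cl Bᵢ ∩ Q` for finite `Bᵢ ⊆ Xᵢ`. As `Bᵢ ⊆ P`, cutting `Eᵢ` down to `P` loses no dimension,
so `Δ_P ≤ Δ_Q` for the pair `{E₁, E₂}` reduces to `d(E₁ ∩ E₂) ≤ d(E₁ ∩ E₂ ∩ P)`; and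
`E₁ ∩ E₂ ∩ P ⊆ X₁ ∩ X₂` because the `Xᵢ` are closed in `P`. -/

lemma Finset.powerset_singleton {β : Type*} [DecidableEq β] (a : β) :
    ({a} : Finset β).powerset = {∅, {a}} := by
  ext
  simp [Finset.subset_singleton_iff]

namespace Pregeometry

variable {α : Type*} [DecidableEq α] (G : Pregeometry α)

lemma dim_le_dim_union (A C : Finset α) : G.dim A ≤ G.dim (A ∪ C) := by
  induction C using Finset.induction_on with
  | empty => simp
  | @insert x C _ ih =>
      calc G.dim A ≤ G.dim (A ∪ C) := ih
      _ ≤ G.dim (insert x (A ∪ C)) := G.dim_le_insert _ _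
      _ = G.dim (A ∪ insert x C) := by rw [Finset.union_insert]

lemma dim_mono {A B : Finset α} (h : A ⊆ B) : G.dim A ≤ G.dim B := by
  simpa [Finset.union_eq_right.mpr h] using G.dim_le_dim_union A B

lemma dim_insert_eq_of_subset {A B : Finset α} {x : α} (hAB : A ⊆ B)
    (h : G.dim (insert x A) = G.dim A) : G.dim (insert x B) = G.dim B := by
  have hs := G.submodular (insert x A) B
  rw [Finset.insert_union, Finset.union_eq_right.mpr hAB] at hs
  have := G.dim_mono (Finset.subset_inter (Finset.subset_insert x A) hAB)
  exact le_antisymm (by omega) (G.dim_le_insert B x)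

lemma subset_cl (Y : Set α) : Y ⊆ G.cl Y := fun x hx =>
  ⟨{x}, by simpa using hx, by rw [Finset.insert_eq_self.mpr (Finset.mem_singleton_self x)]⟩

lemma cl_mono {Y Z : Set α} (h : Y ⊆ Z) : G.cl Y ⊆ G.cl Z := by
  rintro x ⟨A, hA, hd⟩
  exact ⟨A, hA.trans h, hd⟩

lemma dim_union_eq_of_subset_cl {A B : Finset α} (hA : ↑A ⊆ G.cl ↑B) :
    G.dim (A ∪ B) = G.dim B := by
  induction A using Finset.induction_on with
  | empty => simp
  | @insert x A _ ih =>
    obtain ⟨C, hC, hd⟩ := hA (Finset.mem_insert_self x A)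
    rw [Finset.insert_union,
      G.dim_insert_eq_of_subset ((Finset.coe_subset.mp hC).trans Finset.subset_union_right) hd]
    exact ih fun y hy => hA (Finset.mem_insert_of_mem hy)

lemma cl_cl_coe_subset (B : Finset α) : G.cl (G.cl ↑B) ⊆ G.cl ↑B := by
  rintro x ⟨A, hA, hd⟩
  refine ⟨B, subset_rfl, le_antisymm ?_ (G.dim_le_insert B x)⟩
  calc G.dim (insert x B) ≤ G.dim (insert x (A ∪ B)) :=
        G.dim_mono (Finset.insert_subset_insert x Finset.subset_union_right)
  _ = G.dim (A ∪ B) := G.dim_insert_eq_of_subset Finset.subset_union_left hd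
  _ = G.dim B := G.dim_union_eq_of_subset_cl hA

lemma isClosedIn_cl_coe_inter (B : Finset α) (Q : Set α) :
    G.IsClosedIn Q (G.cl ↑B ∩ Q) :=
  ⟨Set.inter_subset_right, Set.Subset.antisymm
    (fun _ hx => ⟨G.cl_cl_coe_subset B (G.cl_mono Set.inter_subset_left hx.1), hx.2⟩)
    (fun _ hx => ⟨G.subset_cl _ hx, hx.2⟩)⟩

lemma exists_finset_subset_cl {Y : Set α} (A : Finset α) (hA : ↑A ⊆ G.cl Y) :
    ∃ B : Finset α, ↑B ⊆ Y ∧ ↑A ⊆ G.cl ↑B := by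
  induction A using Finset.induction_on with
  | empty => exact ⟨∅, by simp, by simp⟩
  | @insert x A _ ih =>
    obtain ⟨B, hBY, hAB⟩ := ih fun y hy => hA (Finset.mem_insert_of_mem hy)
    obtain ⟨C, hCY, hd⟩ := hA (Finset.mem_insert_self x A)
    refine ⟨B ∪ C, by simpa using Set.union_subset hBY hCY, ?_⟩
    rw [Finset.coe_insert, Set.insert_subset_iff]
    exact ⟨⟨C, by simp, hd⟩, hAB.trans (G.cl_mono (by simp))⟩

lemma coe_dim_le_edim {A : Finset α} {Y : Set α} (h : ↑A ⊆ Y) :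
    (G.dim A : ℕ∞) ≤ G.edim Y :=
  le_iSup₂_of_le A h le_rfl

lemma edim_mono {Y Z : Set α} (h : Y ⊆ Z) : G.edim Y ≤ G.edim Z :=
  iSup₂_le fun _ hA => G.coe_dim_le_edim (hA.trans h)

lemma edim_eq_dim_of_subset_cl {B : Finset α} {E : Set α} (hBE : ↑B ⊆ E)
    (hE : E ⊆ G.cl ↑B) : G.edim E = G.dim B := by
  refine le_antisymm (iSup₂_le fun A hA => Nat.cast_le.mpr ?_) (G.coe_dim_le_edim hBE)
  calc G.dim A ≤ G.dim (A ∪ B) := G.dim_mono Finset.subset_union_left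
  _ = G.dim B := G.dim_union_eq_of_subset_cl (hA.trans hE)

lemma edim_cl_coe_inter {B : Finset α} {Q : Set α} (hB : ↑B ⊆ Q) :
    G.edim (G.cl ↑B ∩ Q) = G.dim B :=
  G.edim_eq_dim_of_subset_cl (Set.subset_inter (G.subset_cl _) hB) Set.inter_subset_left

lemma flatSum_singleton (E : Set α) : G.flatSum {E} = G.sdim E := by
  simp [flatSum, Finset.sum_filter, Finset.powerset_singleton]

lemma flatSum_pair (E₁ E₂ : Set α) :
    G.flatSum {E₁, E₂} = (G.sdim E₁ : ℤ) + G.sdim E₂ - G.sdim (E₁ ∩ E₂) := by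
  by_cases h : E₁ = E₂
  · subst h
    simp [flatSum_singleton]
  · rw [flatSum, Finset.sum_filter, Finset.sum_powerset_insert (by simpa using h)]
    simp [Finset.powerset_singleton, h]
    ring

variable {G}

lemma IsClosedIn.cl_inter_subset {P X Y : Set α} (hX : G.IsClosedIn P X) (hYX : Y ⊆ X) :
    G.cl Y ∩ P ⊆ X :=
  hX.2 ▸ Set.inter_subset_inter_left P (G.cl_mono hYX)

theorem Sq.edim_inter_le {P Q : Set α} (h : G.Sq P Q) {B₁ B₂ : Finset α}
    (hB₁ : ↑B₁ ⊆ P) (hB₂ : ↑B₂ ⊆ P) :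
    G.edim (G.cl ↑B₁ ∩ Q ∩ (G.cl ↑B₂ ∩ Q)) ≤ G.edim (G.cl ↑B₁ ∩ Q ∩ (G.cl ↑B₂ ∩ Q) ∩ P) := by
  have hE : ∀ B : Finset α, ↑B ⊆ P →
      G.edim (G.cl ↑B ∩ Q) = G.dim B ∧ G.edim (G.cl ↑B ∩ Q ∩ P) = G.dim B := fun B hB =>
    ⟨G.edim_cl_coe_inter (hB.trans h.1), by
      rw [Set.inter_assoc, Set.inter_eq_right.mpr h.1]; exact G.edim_cl_coe_inter hB⟩
  obtain ⟨hE₁, hE₁P⟩ := hE B₁ hB₁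
  obtain ⟨hE₂, hE₂P⟩ := hE B₂ hB₂
  set E₁ := G.cl ↑B₁ ∩ Q
  set E₂ := G.cl ↑B₂ ∩ Q
  have hΔ := h.2 {E₁, E₂} (by simp [E₁, E₂, isClosedIn_cl_coe_inter]) (by simp [hE₁, hE₂])
  rw [Finset.image_insert, Finset.image_singleton, flatSum_pair, flatSum_pair,
    ← Set.inter_inter_distrib_right] at hΔ
  simp only [sdim, hE₁, hE₂, hE₁P, hE₂P, ENat.toNat_natCast] at hΔ
  have hfin : G.edim (E₁ ∩ E₂) ≠ ⊤ :=
    ne_top_of_le_ne_top (by simp [hE₁]) (G.edim_mono Set.inter_subset_left)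
  calc G.edim (E₁ ∩ E₂) = (G.edim (E₁ ∩ E₂)).toNat := (ENat.natCast_toNat hfin).symm
  _ ≤ (G.edim (E₁ ∩ E₂ ∩ P)).toNat := by exact_mod_cast (by omega)
  _ ≤ G.edim (E₁ ∩ E₂ ∩ P) := ENat.natCast_toNat_le_self _

end Pregeometry

/-- a strong embedding `H ⊑ G` implies `H ⊑* G`. -/
theorem sqStar_of_sq {α : Type*} [DecidableEq α] (G : Pregeometry α)
    (P Q : Set α) (h : G.Sq P Q) : G.SqStar P Q := by
  refine ⟨h.1, fun X₁ X₂ hX₁ hX₂ => le_antisymm ?_ (iSup₂_le fun A hA => ?_)⟩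
  · exact G.edim_mono fun x hx => ⟨⟨G.subset_cl _ hx.1, G.subset_cl _ hx.2⟩, h.1 (hX₁.1 hx.1)⟩
  obtain ⟨B₁, hB₁X, hAB₁⟩ := G.exists_finset_subset_cl A fun y hy => (hA hy).1.1
  obtain ⟨B₂, hB₂X, hAB₂⟩ := G.exists_finset_subset_cl A fun y hy => (hA hy).1.2
  calc (G.dim A : ℕ∞) ≤ G.edim (G.cl ↑B₁ ∩ Q ∩ (G.cl ↑B₂ ∩ Q)) :=
        G.coe_dim_le_edim fun y hy => ⟨⟨hAB₁ hy, (hA hy).2⟩, hAB₂ hy, (hA hy).2⟩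
  _ ≤ G.edim (G.cl ↑B₁ ∩ Q ∩ (G.cl ↑B₂ ∩ Q) ∩ P) :=
        h.edim_inter_le (hB₁X.trans hX₁.1) (hB₂X.trans hX₂.1)
  _ ≤ G.edim (X₁ ∩ X₂) := G.edim_mono fun y ⟨⟨⟨hy₁, _⟩, hy₂, _⟩, hyP⟩ =>
        ⟨hX₁.cl_inter_subset hB₁X ⟨hy₁, hyP⟩, hX₂.cl_inter_subset hB₂X ⟨hy₂, hyP⟩⟩
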